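/- arXiv:1203.5591 — 4 statements merged into one kernel-verified Lean document; each statement's English description precedes it below -/
import Mathlib

section
/- There exist three absolutely continuous probability measures μ₀, μ₁, μ₂ on ℝ² such that no closed halfplane H satisfies μ₀(H) = μ₁(H) = μ₂(H) > 0. (For example, measures distributed along three rays emanating from the vertices of a regular triangle and going away from the triangle.) -/
open MeasureTheory
open scoped RealInnerProductSpace

namespace NoEqualCut

noncomputable section

abbrev E := EuclideanSpace ℝ (Fin 2)

/-- The measurable equiv between `ℝ²` (Euclidean) and `ℝ × ℝ`. -/
def φ : E ≃ᵐ ℝ × ℝ :=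
  (MeasurableEquiv.toLp 2 (Fin 2 → ℝ)).symm.trans MeasurableEquiv.finTwoArrow

lemma φ_measurePreserving : MeasurePreserving φ volume volume :=
  (volume_preserving_finTwoArrow ℝ).comp
    (EuclideanSpace.volume_preserving_symm_measurableEquiv_toLp (Fin 2))

def G : Measure ℝ := ProbabilityTheory.gaussianReal 0 1

instance : IsProbabilityMeasure G := by
  unfold G; infer_instance

/-- The base measure: a standard Gaussian on `ℝ²`. -/
def μbase : Measure E := (G.prod G).map φ.symm

instance : IsProbabilityMeasure μbase :=
  Measure.isProbabilityMeasure_map φ.symm.measurable.aemeasurable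

lemma G_ac : G ≪ (volume : Measure ℝ) :=
  ProbabilityTheory.gaussianReal_absolutelyContinuous 0 one_ne_zero

lemma ac_G : (volume : Measure ℝ) ≪ G :=
  ProbabilityTheory.gaussianReal_absolutelyContinuous' 0 one_ne_zero

lemma μbase_ac : μbase ≪ (volume : Measure E) := by
  have h1 : G.prod G ≪ (volume : Measure (ℝ × ℝ)) := by
    rw [Measure.volume_eq_prod]
    exact Measure.AbsolutelyContinuous.prod G_ac G_ac
  have h2 := φ.symm.measurableEmbedding.absolutelyContinuous_map h1
  rwa [φ_measurePreserving.symm φ |>.map_eq] at h2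

lemma ac_μbase : (volume : Measure E) ≪ μbase := by
  have h1 : (volume : Measure (ℝ × ℝ)) ≪ G.prod G := by
    rw [Measure.volume_eq_prod]
    exact Measure.AbsolutelyContinuous.prod ac_G ac_G
  have h2 := φ.symm.measurableEmbedding.absolutelyContinuous_map h1
  rwa [φ_measurePreserving.symm φ |>.map_eq] at h2

lemma measurableSet_halfplane (a : E) (b : ℝ) : MeasurableSet {x : E | ⟪a, x⟫ ≤ b} :=
  measurableSet_le (Continuous.measurable (continuous_const.inner continuous_id)) measurable_const

/-- Strict monotonicity of halfplane masses of `μbase`. -/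
lemma μbase_strictMono (a : E) (ha : a ≠ 0) {t s : ℝ} (hts : t < s) :
    μbase {x : E | ⟪a, x⟫ ≤ t} < μbase {x : E | ⟪a, x⟫ ≤ s} := by
  have hmeas_t := measurableSet_halfplane a t
  have hcont : Continuous fun x : E => ⟪a, x⟫ := continuous_const.inner continuous_id
  set U : Set E := {x : E | t < ⟪a, x⟫ ∧ ⟪a, x⟫ < s} with hU
  have hUopen : IsOpen U := by
    have h1 : IsOpen {x : E | t < ⟪a, x⟫} := isOpen_lt continuous_const hcont
    have h2 : IsOpen {x : E | ⟪a, x⟫ < s} := isOpen_lt hcont continuous_const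
    exact h1.inter h2
  have hUne : U.Nonempty := by
    refine ⟨(((t + s) / 2) / ‖a‖ ^ 2) • a, ?_, ?_⟩ <;>
    · have hna : ‖a‖ ^ 2 ≠ 0 := pow_ne_zero _ (norm_ne_zero_iff.mpr ha)
      rw [real_inner_smul_right, real_inner_self_eq_norm_sq, div_mul_cancel₀ _ hna]
      linarith
  have hUpos : 0 < μbase U := by
    have hvol : volume U ≠ 0 := (hUopen.measure_pos volume hUne).ne'
    have : μbase U ≠ 0 := fun h => hvol (ac_μbase h)
    exact this.bot_lt
  have hsub : U ⊆ {x : E | ⟪a, x⟫ ≤ s} \ {x : E | ⟪a, x⟫ ≤ t} := by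
    rintro x ⟨hx1, hx2⟩
    exact ⟨le_of_lt hx2, not_le.mpr hx1⟩
  have hsubset : {x : E | ⟪a, x⟫ ≤ t} ⊆ {x : E | ⟪a, x⟫ ≤ s} :=
    fun x hx => le_trans hx (le_of_lt hts)
  have hdiff : 0 < μbase ({x : E | ⟪a, x⟫ ≤ s} \ {x : E | ⟪a, x⟫ ≤ t}) :=
    lt_of_lt_of_le hUpos (measure_mono hsub)
  have hfin : μbase {x : E | ⟪a, x⟫ ≤ t} ≠ ⊤ := measure_ne_top _ _
  rw [measure_diff hsubset hmeas_t.nullMeasurableSet hfin] at hdiff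
  exact tsub_pos_iff_lt.mp hdiff


lemma shift_ac (v : E) : μbase.map (· + v) ≪ (volume : Measure E) := by
  have h := (MeasurableEquiv.addRight v).measurableEmbedding.absolutelyContinuous_map μbase_ac
  simpa [map_add_right_eq_self (volume : Measure E) v] using h

instance shift_prob (v : E) : IsProbabilityMeasure (μbase.map (· + v)) :=
  Measure.isProbabilityMeasure_map (measurable_add_const v).aemeasurable

lemma shift_apply (v : E) (a : E) (b : ℝ) :
    μbase.map (· + v) {x : E | ⟪a, x⟫ ≤ b} = μbase {x : E | ⟪a, x⟫ ≤ b - ⟪a, v⟫} := by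
  rw [Measure.map_apply (measurable_add_const v) (measurableSet_halfplane a b)]
  congr 1
  ext x
  simp only [Set.mem_preimage, Set.mem_setOf_eq, inner_add_right, le_sub_iff_add_le]

end

end NoEqualCut

/-- There exist three absolutely continuous probability measures on `ℝ²` such that no closed
halfplane cuts the same positive fraction of all three. -/
theorem no_positive_equal_cut_exists :
    ∃ μ₀ μ₁ μ₂ : Measure (EuclideanSpace ℝ (Fin 2)),
      μ₀ ≪ volume ∧ μ₁ ≪ volume ∧ μ₂ ≪ volume ∧
      IsProbabilityMeasure μ₀ ∧ IsProbabilityMeasure μ₁ ∧ IsProbabilityMeasure μ₂ ∧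
      ∀ (a : EuclideanSpace ℝ (Fin 2)) (b : ℝ), a ≠ 0 →
        ¬(μ₀ {x | ⟪a, x⟫ ≤ b} = μ₁ {x | ⟪a, x⟫ ≤ b} ∧
          μ₁ {x | ⟪a, x⟫ ≤ b} = μ₂ {x | ⟪a, x⟫ ≤ b} ∧
          0 < μ₀ {x | ⟪a, x⟫ ≤ b}) := by
  open NoEqualCut in
  refine ⟨μbase, μbase.map (· + EuclideanSpace.single 0 (1 : ℝ)),
      μbase.map (· + EuclideanSpace.single 1 (1 : ℝ)),
      μbase_ac, shift_ac _, shift_ac _, inferInstance, shift_prob _, shift_prob _, ?_⟩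
  intro a b ha
  rintro ⟨h01, h12, -⟩
  rw [shift_apply] at h01 h12
  rw [shift_apply] at h12
  have hv1 : ⟪a, EuclideanSpace.single 0 (1 : ℝ)⟫ = a 0 := by
    rw [EuclideanSpace.inner_single_right]; simp
  have hv2 : ⟪a, EuclideanSpace.single 1 (1 : ℝ)⟫ = a 1 := by
    rw [EuclideanSpace.inner_single_right]; simp
  rw [hv1] at h01 h12
  rw [hv2] at h12
  have key : ∀ c : ℝ, c ≠ 0 →
      μbase {x : EuclideanSpace ℝ (Fin 2) | ⟪a, x⟫ ≤ b}
        ≠ μbase {x : EuclideanSpace ℝ (Fin 2) | ⟪a, x⟫ ≤ b - c} := by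
    intro c hc
    rcases hc.lt_or_gt with h | h
    · exact (μbase_strictMono a ha (by linarith : b < b - c)).ne
    · exact (μbase_strictMono a ha (by linarith : b - c < b)).ne'
  by_cases h0 : a 0 = 0
  · have h1 : a 1 ≠ 0 := by
      intro h1
      apply ha
      ext i
      fin_cases i
      · simpa using h0
      · simpa using h1
    rw [h0, sub_zero] at h01 h12
    exact key (a 1) h1 (h01.trans h12)
  · exact key (a 0) h0 h01
end

section
/- Let α ∈ (0,1) be a real number that is not of the form 1/m for any positive integer m. Then there exist two absolutely continuous probability measures μ₀, μ₁ on ℝ such that no convex set (interval) C ⊆ ℝ satisfies μ₀(C) = μ₁(C) = α. -/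
open MeasureTheory

/-- If `α ∈ (0,1)` is not of the form `1/m`, there are two absolutely continuous probability
measures on `ℝ` such that no convex subset of `ℝ` carries mass `α` of both. -/
theorem no_convex_cut_of_not_reciprocal (α : ℝ) (hα0 : 0 < α) (hα1 : α < 1)
    (hα : ∀ m : ℕ, 0 < m → α ≠ 1 / m) :
    ∃ μ₀ μ₁ : Measure ℝ,
      μ₀ ≪ volume ∧ μ₁ ≪ volume ∧
      IsProbabilityMeasure μ₀ ∧ IsProbabilityMeasure μ₁ ∧
      ∀ C : Set ℝ, Convex ℝ C →
        ¬(μ₀ C = ENNReal.ofReal α ∧ μ₁ C = ENNReal.ofReal α) := by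
  -- choose `n` with `1/(n+1) < α < 1/n`
  set n : ℕ := ⌊1/α⌋₊ with hn_def
  have h1α : 1 < 1/α := by rw [lt_div_iff₀ hα0]; linarith
  have hn1 : 1 ≤ n := Nat.le_floor (by exact_mod_cast h1α.le)
  have hn0 : (0:ℝ) < n := by exact_mod_cast hn1
  have hn1' : (1:ℝ) ≤ n := by exact_mod_cast hn1
  have hnle : (n:ℝ) ≤ 1/α := Nat.floor_le (by positivity)
  have hnlt : (n:ℝ) < 1/α := by
    rcases lt_or_eq_of_le hnle with h | h
    · exact h
    · exact absurd (by rw [eq_div_iff hα0.ne'] at h; field_simp at h ⊢; linarith [h]) (hα n hn1)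
  have hlt : 1/α < (n:ℝ) + 1 := by
    have := Nat.lt_floor_add_one (1/α)
    exact_mod_cast this
  have hα_lt : α < 1/n := by
    rw [lt_div_iff₀ hn0]; rw [lt_div_iff₀ hα0] at hnlt; linarith
  have hα_gt : 1/((n:ℝ)+1) < α := by
    rw [div_lt_iff₀ (by positivity)]; rw [div_lt_iff₀ hα0] at hlt; linarith
  -- the width of the small intervals
  set ε : ℝ := (α - 1/((n:ℝ)+1))/2 with hε_def
  have hε0 : 0 < ε := by simp only [hε_def]; linarith
  have hεsmall : ε < 1/((n:ℝ)+1) := by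
    have : α < 2/((n:ℝ)+1) := by
      calc α < 1/n := hα_lt
      _ ≤ 2/((n:ℝ)+1) := by
        rw [div_le_div_iff₀ hn0 (by positivity)]; linarith
    have ht0 : (0:ℝ) < 1/((n:ℝ)+1) := by positivity
    have h2 : 2/((n:ℝ)+1) = 2*(1/((n:ℝ)+1)) := by ring
    simp only [hε_def]; linarith
  have hεα : ε + 1/((n:ℝ)+1) < α := by simp only [hε_def]; linarith
  -- the centers
  set c : ℕ → ℝ := fun i => (i:ℝ)/((n:ℝ)+1) with hc_def
  set B : Set ℝ := ⋃ i ∈ Finset.Icc 1 n, Set.Ioo (c i - ε/2) (c i + ε/2) with hB_def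
  have hBmeas : MeasurableSet B := by
    exact MeasurableSet.biUnion (Finset.Icc 1 n).countable_toSet
      (fun i _ => measurableSet_Ioo)
  have hdisj : (↑(Finset.Icc 1 n) : Set ℕ).PairwiseDisjoint
      (fun i => Set.Ioo (c i - ε/2) (c i + ε/2)) := by
    intro i hi j hj hij
    have key : ∀ i j : ℕ, i < j → Disjoint (Set.Ioo (c i - ε/2) (c i + ε/2))
        (Set.Ioo (c j - ε/2) (c j + ε/2)) := by
      intro i j h
      refine Set.Ioo_disjoint_Ioo.mpr ?_
      have hij' : (i:ℝ) + 1 ≤ j := by exact_mod_cast h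
      have : c i + ε/2 ≤ c j - ε/2 := by
        simp only [hc_def]
        rw [div_add' _ _ _ (by positivity), div_sub' (by positivity),
          div_le_div_iff₀ (by positivity) (by positivity)]
        have hε' : ε * ((n:ℝ)+1) < 1 := by
          rw [← lt_div_iff₀ (by positivity)]; exact hεsmall
        nlinarith
      exact le_trans (min_le_left _ _) (le_trans this (le_max_right _ _))
    rcases lt_or_gt_of_ne hij with h | h
    · exact key i j h
    · exact (key j i h).symm
  have hvolblob : ∀ i : ℕ, volume (Set.Ioo (c i - ε/2) (c i + ε/2)) = ENNReal.ofReal ε := by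
    intro i; rw [Real.volume_Ioo]; ring_nf
  have hvolB : volume B = ENNReal.ofReal ((n:ℝ) * ε) := by
    rw [hB_def, measure_biUnion_finset hdisj (fun i _ => measurableSet_Ioo)]
    simp only [hvolblob]
    rw [Finset.sum_const, Nat.card_Icc]
    simp only [Nat.add_sub_cancel, nsmul_eq_mul]
    rw [ENNReal.ofReal_mul (by positivity), ENNReal.ofReal_natCast]
  -- the measures
  refine ⟨volume.restrict (Set.Ioo 0 1),
    (ENNReal.ofReal ((n:ℝ) * ε))⁻¹ • volume.restrict B, ?_, ?_, ?_, ?_, ?_⟩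
  · exact Measure.restrict_le_self.absolutelyContinuous
  · exact Measure.smul_absolutelyContinuous.trans
      Measure.restrict_le_self.absolutelyContinuous
  · constructor
    rw [Measure.restrict_apply MeasurableSet.univ, Set.univ_inter, Real.volume_Ioo]
    norm_num
  · constructor
    rw [Measure.smul_apply, Measure.restrict_apply MeasurableSet.univ, Set.univ_inter,
      hvolB, smul_eq_mul]
    exact ENNReal.inv_mul_cancel (ENNReal.ofReal_pos.mpr (mul_pos hn0 hε0)).ne'
      ENNReal.ofReal_ne_top
  · rintro C hC ⟨h0, h1⟩
    rw [Measure.restrict_apply' measurableSet_Ioo] at h0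
    set S : Set ℝ := C ∩ Set.Ioo 0 1 with hS_def
    have hSsub : S ⊆ Set.Ioo 0 1 := Set.inter_subset_right
    have hSC : S ⊆ C := Set.inter_subset_left
    have hSconv : Convex ℝ S := hC.inter (convex_Ioo 0 1)
    have hSne : S.Nonempty := by
      rw [Set.nonempty_iff_ne_empty]
      intro h
      rw [h, measure_empty] at h0
      exact (ENNReal.ofReal_pos.mpr hα0).ne' h0.symm
    have hbdd_above : BddAbove S := (bddAbove_Ioo (a := (0:ℝ)) (b := 1)).mono hSsub
    have hbdd_below : BddBelow S := (bddBelow_Ioo : BddBelow (Set.Ioo (0:ℝ) 1)).mono hSsub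
    set a : ℝ := sInf S with ha_def
    set b : ℝ := sSup S with hb_def
    have ha0 : 0 ≤ a := le_csInf hSne (fun x hx => (hSsub hx).1.le)
    have hb1 : b ≤ 1 := csSup_le hSne (fun x hx => (hSsub hx).2.le)
    have hab : a ≤ b := csInf_le_csSup hSne hbdd_below hbdd_above
    have hsub1 : Set.Ioo a b ⊆ S := by
      rintro x ⟨hax, hxb⟩
      obtain ⟨y, hy, hyx⟩ := exists_lt_of_csInf_lt hSne hax
      obtain ⟨z, hz, hxz⟩ := exists_lt_of_lt_csSup hSne hxb
      exact hSconv.ordConnected.out hy hz ⟨hyx.le, hxz.le⟩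
    have hsub2 : S ⊆ Set.Icc a b :=
      fun x hx => ⟨csInf_le hbdd_below hx, le_csSup hbdd_above hx⟩
    have hba : b - a = α := by
      have h₁ : ENNReal.ofReal (b - a) ≤ ENNReal.ofReal α := by
        rw [← h0, ← Real.volume_Ioo (a := a) (b := b)]
        exact measure_mono hsub1
      have h₂ : ENNReal.ofReal α ≤ ENNReal.ofReal (b - a) := by
        rw [← h0]
        calc volume S ≤ volume (Set.Icc a b) := measure_mono hsub2
          _ = ENNReal.ofReal (b - a) := Real.volume_Icc
      exact (ENNReal.ofReal_eq_ofReal_iff (by linarith) hα0.le).mp (le_antisymm h₁ h₂)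
    -- find a blob inside (a,b)
    set i : ℕ := ⌈(a + ε/2) * ((n:ℝ)+1)⌉₊ with hi_def
    have hi1 : 1 ≤ i := Nat.one_le_ceil_iff.mpr (by positivity)
    have hci_lb : a + ε/2 ≤ c i := by
      simp only [hc_def]
      rw [le_div_iff₀ (by positivity)]
      exact Nat.le_ceil _
    have hci_ub : c i ≤ b - ε/2 := by
      have h := Nat.ceil_lt_add_one (a := (a + ε/2) * ((n:ℝ)+1)) (by positivity)
      simp only [hc_def]
      rw [div_le_iff₀ (by positivity)]
      have : ε + 1/((n:ℝ)+1) ≤ b - a := by rw [hba]; exact hεα.le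
      have h1n : (1:ℝ)/((n:ℝ)+1) * ((n:ℝ)+1) = 1 := by field_simp
      nlinarith
    have hin : i ∈ Finset.Icc 1 n := by
      refine Finset.mem_Icc.mpr ⟨hi1, ?_⟩
      by_contra h
      push_neg at h
      have : (n:ℝ) + 1 ≤ i := by exact_mod_cast h
      have hci : 1 ≤ c i := by
        simp only [hc_def]; rw [le_div_iff₀ (by positivity)]; linarith
      linarith
    have hblobC : Set.Ioo (c i - ε/2) (c i + ε/2) ⊆ C := by
      refine Set.Subset.trans ?_ (hsub1.trans hSC)
      intro x hx
      exact ⟨by linarith [hx.1], by linarith [hx.2]⟩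
    have hblobB : Set.Ioo (c i - ε/2) (c i + ε/2) ⊆ B := by
      rw [hB_def]
      exact Set.subset_biUnion_of_mem (u := fun j => Set.Ioo (c j - ε/2) (c j + ε/2)) hin
    have hμ₁blob : ((ENNReal.ofReal ((n:ℝ) * ε))⁻¹ • volume.restrict B)
        (Set.Ioo (c i - ε/2) (c i + ε/2)) = ENNReal.ofReal (1/(n:ℝ)) := by
      rw [Measure.smul_apply, Measure.restrict_apply measurableSet_Ioo,
        Set.inter_eq_left.mpr hblobB, hvolblob, smul_eq_mul]
      rw [ENNReal.ofReal_mul (by positivity),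
        ENNReal.mul_inv (Or.inl (ENNReal.ofReal_pos.mpr hn0).ne')
          (Or.inl ENNReal.ofReal_ne_top)]
      rw [mul_assoc, ENNReal.inv_mul_cancel (ENNReal.ofReal_pos.mpr hε0).ne'
        ENNReal.ofReal_ne_top, mul_one, ← ENNReal.ofReal_inv_of_pos hn0, one_div]
    have hle : ENNReal.ofReal (1/(n:ℝ)) ≤ ENNReal.ofReal α := by
      rw [← h1, ← hμ₁blob]
      exact measure_mono hblobC
    rw [ENNReal.ofReal_le_ofReal_iff hα0.le] at hle
    linarith
end

section
/- There exist two absolutely continuous probability measures μ₀, μ₁ on ℝ^d such that for every α > 1/2 there is no convex set C with μ₀(C) = μ₁(C) = α. (Take μ₀ concentrated uniformly in a small ball around the origin and μ₁ concentrated uniformly in a thin shell around the unit sphere.) -/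
open MeasureTheory Set
open scoped ENNReal

noncomputable section NoConvexCutAux

variable (d : ℕ)

local notation "E" => EuclideanSpace ℝ (Fin d)

/-- the (unnormalized) Gaussian density. -/
def nccDen (x : E) : ℝ≥0∞ := ENNReal.ofReal (Real.exp (-‖x‖ ^ 2))

lemma nccDen_meas : Measurable (nccDen d) :=
  (Real.continuous_exp.comp (continuous_norm.pow 2).neg).measurable.ennreal_ofReal

lemma nccDen_pos (x : E) : 0 < nccDen d x :=
  ENNReal.ofReal_pos.mpr (Real.exp_pos _)

lemma ncc_integrable : Integrable (fun x : E => Real.exp (-‖x‖ ^ 2)) := by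
  have h := GaussianFourier.integrable_cexp_neg_mul_sq_norm_add_of_euclideanSpace
    (ι := Fin d) (b := 1) (by norm_num) 0 0
  have h2 := h.norm
  refine h2.congr (Filter.Eventually.of_forall fun x => ?_)
  simp [Complex.norm_exp, ← Complex.ofReal_pow]

/-- total mass -/
def nccMass : ℝ≥0∞ := ∫⁻ x : E, nccDen d x

lemma nccMass_eq : nccMass d = ENNReal.ofReal (∫ x : E, Real.exp (-‖x‖ ^ 2)) :=
  (ofReal_integral_eq_lintegral_ofReal (ncc_integrable d)
    (Filter.Eventually.of_forall fun x => (Real.exp_pos _).le)).symm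

lemma nccMass_ne_top : nccMass d ≠ ∞ := by
  rw [nccMass_eq]; exact ENNReal.ofReal_ne_top

lemma nccMass_ne_zero : nccMass d ≠ 0 := by
  rw [nccMass_eq]
  refine (ENNReal.ofReal_pos.mpr ?_).ne'
  rw [integral_pos_iff_support_of_nonneg (fun x => (Real.exp_pos _).le) (ncc_integrable d)]
  have : Function.support (fun x : E => Real.exp (-‖x‖ ^ 2)) = univ := by
    ext x; simp [Function.mem_support, (Real.exp_pos _).ne']
  rw [this]
  exact isOpen_univ.measure_pos volume ⟨0, trivial⟩

/-- the base measure -/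
def nccMu : Measure E := (nccMass d)⁻¹ • (volume.withDensity (nccDen d))

lemma nccMu_apply {S : Set E} (hS : MeasurableSet S) :
    nccMu d S = (nccMass d)⁻¹ * ∫⁻ x in S, nccDen d x := by
  rw [nccMu, Measure.smul_apply, withDensity_apply _ hS, smul_eq_mul]

instance nccMu_prob : IsProbabilityMeasure (nccMu d) := by
  constructor
  rw [nccMu_apply d MeasurableSet.univ, Measure.restrict_univ]
  exact ENNReal.inv_mul_cancel (nccMass_ne_zero d) (nccMass_ne_top d)

lemma nccMu_ac : nccMu d ≪ (volume : Measure E) := by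
  refine Measure.AbsolutelyContinuous.mk fun S hS h0 => ?_
  rw [nccMu_apply d hS, setLIntegral_measure_zero _ _ h0, mul_zero]

lemma nccMu_pos {S : Set E} (hS : MeasurableSet S) (h0 : volume S ≠ 0) :
    0 < nccMu d S := by
  rw [nccMu_apply d hS]
  refine ENNReal.mul_pos (by simp [nccMass_ne_top d]) ?_
  intro hint
  rw [lintegral_eq_zero_iff (nccDen_meas d)] at hint
  have : (volume.restrict S) {x : E | nccDen d x ≠ 0} = 0 := by
    simpa [ae_iff, Filter.EventuallyEq] using hint
  rw [show {x : E | nccDen d x ≠ 0} = univ from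
    eq_univ_of_forall fun x => (nccDen_pos d x).ne', Measure.restrict_apply_univ] at this
  exact h0 this

lemma ncc_map_neg : Measure.map Neg.neg (volume : Measure E) = volume := by
  ext s hs
  rw [Measure.map_apply measurable_neg hs]
  have : Neg.neg ⁻¹' s = (fun x : E => (-1 : ℝ) • x) ⁻¹' s := by
    ext x; simp
  rw [this, Measure.addHaar_preimage_smul _ (by norm_num : (-1:ℝ) ≠ 0)]
  simp [abs_inv, abs_pow]

lemma nccMu_neg {S : Set E} (hS : MeasurableSet S) :
    nccMu d (Neg.neg ⁻¹' S) = nccMu d S := by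
  rw [nccMu_apply d hS, nccMu_apply d (hS.preimage measurable_neg)]
  congr 1
  have h : ∫⁻ x in S, nccDen d x = ∫⁻ x in Neg.neg ⁻¹' S, nccDen d (-x) := by
    conv_lhs => rw [← ncc_map_neg d]
    exact setLIntegral_map hS (nccDen_meas d) measurable_neg
  rw [h]
  refine lintegral_congr fun x => ?_
  simp [nccDen]

lemma nccMu_halfspace (f : (EuclideanSpace ℝ (Fin d)) →L[ℝ] ℝ) (hf : f ≠ 0) :
    2 * nccMu d {x | 0 < f x} ≤ 1 ∧ 2 * nccMu d {x : E | f x ≤ 0} ≤ 1 := by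
  have hA : MeasurableSet {x : E | 0 < f x} :=
    measurableSet_lt measurable_const f.continuous.measurable
  have hB : MeasurableSet {x : E | f x < 0} :=
    measurableSet_lt f.continuous.measurable measurable_const
  have hZ : MeasurableSet {x : E | f x = 0} :=
    measurableSet_eq_fun f.continuous.measurable measurable_const
  have hZ0 : nccMu d {x : E | f x = 0} = 0 := by
    apply nccMu_ac d
    have hker : {x : E | f x = 0} = (LinearMap.ker (f : E →ₗ[ℝ] ℝ) : Set E) := by
      ext x; simp [LinearMap.mem_ker]
    rw [hker]
    refine Measure.addHaar_submodule _ _ fun htop => hf ?_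
    ext x
    simpa using LinearMap.mem_ker.mp (htop ▸ Submodule.mem_top : x ∈ LinearMap.ker (f : E →ₗ[ℝ] ℝ))
  have hBA : nccMu d {x : E | f x < 0} = nccMu d {x : E | 0 < f x} := by
    have : {x : E | f x < 0} = Neg.neg ⁻¹' {x : E | 0 < f x} := by
      ext x; simp [map_neg]
    rw [this, nccMu_neg d hA]
  have hle : nccMu d {x : E | f x ≤ 0} = nccMu d {x : E | 0 < f x} := by
    have hsplit : {x : E | f x ≤ 0} = {x : E | f x < 0} ∪ {x : E | f x = 0} := by
      ext x; simp [le_iff_lt_or_eq]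
    have huz : nccMu d ({x : E | f x < 0} ∪ {x : E | f x = 0}) = nccMu d {x : E | f x < 0} :=
      le_antisymm ((measure_union_le _ _).trans (by rw [hZ0, add_zero]))
        (measure_mono subset_union_left)
    rw [hsplit, huz, hBA]
  have hcompl : {x : E | f x ≤ 0} = {x : E | 0 < f x}ᶜ := by
    ext x; simp [not_lt]
  have htot : nccMu d {x : E | 0 < f x} + nccMu d {x : E | f x ≤ 0} = 1 := by
    rw [hcompl]
    rw [measure_add_measure_compl hA, measure_univ]
  rw [hle] at htot ⊢
  rw [two_mul, htot]
  exact ⟨le_rfl, le_rfl⟩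

end NoConvexCutAux

/-- There are two absolutely continuous probability measures on `ℝ^d` (`d ≥ 1`) such that for
every fraction `α > 1/2` no convex set carries mass `α` of both measures. -/
theorem no_convex_cut_above_half (d : ℕ) (hd : 1 ≤ d) :
    ∃ μ₀ μ₁ : Measure (EuclideanSpace ℝ (Fin d)),
      μ₀ ≪ volume ∧ μ₁ ≪ volume ∧
      IsProbabilityMeasure μ₀ ∧ IsProbabilityMeasure μ₁ ∧
      ∀ α : ℝ, 1 / 2 < α → α < 1 →
        ∀ C : Set (EuclideanSpace ℝ (Fin d)), Convex ℝ C →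
          ¬(μ₀ C = ENNReal.ofReal α ∧ μ₁ C = ENNReal.ofReal α) := by
  classical
  set E := EuclideanSpace ℝ (Fin d) with hE
  set h2 : E → E := fun x => (2 : ℝ) • x with hh2
  have hmeas2 : Measurable h2 := (continuous_const_smul (2:ℝ)).measurable
  set μ₀ : Measure E := nccMu d with hμ₀
  set μ₁ : Measure E := μ₀.map h2 with hμ₁
  have hac0 : μ₀ ≪ (volume : Measure E) := nccMu_ac d
  have hac1 : μ₁ ≪ (volume : Measure E) := by
    refine Measure.AbsolutelyContinuous.mk fun S hS h0 => ?_
    rw [hμ₁, Measure.map_apply hmeas2 hS]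
    apply hac0
    have : h2 ⁻¹' S = (fun x : E => (2:ℝ) • x) ⁻¹' S := rfl
    rw [this, Measure.addHaar_preimage_smul _ (by norm_num : (2:ℝ) ≠ 0), h0, mul_zero]
  have hp0 : IsProbabilityMeasure μ₀ := nccMu_prob d
  have hp1 : IsProbabilityMeasure μ₁ := Measure.isProbabilityMeasure_map hmeas2.aemeasurable
  refine ⟨μ₀, μ₁, hac0, hac1, hp0, hp1, ?_⟩
  rintro α hα2 hα1 C hC ⟨hC0, hC1⟩
  -- pass to the closure
  set D : Set E := closure C with hDdef
  have hDclosed : IsClosed D := isClosed_closure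
  have hDconv : Convex ℝ D := hC.closure
  have hDmeas : MeasurableSet D := hDclosed.measurableSet
  have hclos : ∀ μ : Measure E, μ ≪ (volume : Measure E) → μ D = μ C := by
    intro μ hμ
    have hf0 : μ (frontier C) = 0 := hμ (hC.addHaar_frontier volume)
    refine le_antisymm ?_ (measure_mono subset_closure)
    calc μ D ≤ μ (C ∪ frontier C) := measure_mono (fun x hx => by
            by_cases h : x ∈ C
            · exact Or.inl h
            · exact Or.inr ⟨hx, fun hi => h (interior_subset hi)⟩)
      _ ≤ μ C + μ (frontier C) := measure_union_le _ _
      _ = μ C := by rw [hf0, add_zero]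
  have hD0 : μ₀ D = ENNReal.ofReal α := by rw [hclos μ₀ hac0, hC0]
  have hD1 : μ₁ D = ENNReal.ofReal α := by rw [hclos μ₁ hac1, hC1]
  set D' : Set E := h2 ⁻¹' D with hD'def
  have hD'0 : μ₀ D' = ENNReal.ofReal α := by
    rw [← hD1, hμ₁, Measure.map_apply hmeas2 hDmeas]
  -- halfspace contradiction helper
  have hhalf : ∀ (f : E →L[ℝ] ℝ), f ≠ 0 → (∀ a ∈ D, f a ≤ 0) → False := by
    intro f hf hsub
    have h1 := (nccMu_halfspace d f hf).2
    have hle : ENNReal.ofReal α ≤ nccMu d {x : E | f x ≤ 0} := by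
      rw [← hD0]; exact measure_mono hsub
    have : 2 * ENNReal.ofReal α ≤ 1 :=
      le_trans (mul_le_mul_right hle 2) h1
    rw [show (2 : ℝ≥0∞) = ENNReal.ofReal (2:ℝ) by simp,
      ← ENNReal.ofReal_mul (by norm_num)] at this
    have := ENNReal.ofReal_le_one.mp this
    linarith
  have hhalf' : ∀ (f : E →L[ℝ] ℝ), f ≠ 0 → (∀ a ∈ D, 0 < f a) → False := by
    intro f hf hsub
    have h1 := (nccMu_halfspace d f hf).1
    have hle : ENNReal.ofReal α ≤ nccMu d {x : E | 0 < f x} := by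
      rw [← hD0]; exact measure_mono hsub
    have : 2 * ENNReal.ofReal α ≤ 1 :=
      le_trans (mul_le_mul_right hle 2) h1
    rw [show (2 : ℝ≥0∞) = ENNReal.ofReal (2:ℝ) by simp,
      ← ENNReal.ofReal_mul (by norm_num)] at this
    have := ENNReal.ofReal_le_one.mp this
    linarith
  by_cases h0D : (0 : E) ∈ D
  · -- case A : 0 ∈ D
    have hD'sub : D' ⊆ D := by
      intro x hx
      have h2x : (2:ℝ) • x ∈ D := hx
      have := hDconv h2x h0D (by norm_num : (0:ℝ) ≤ 1/2) (by norm_num : (0:ℝ) ≤ 1/2)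
        (by norm_num)
      simpa [smul_smul] using this
    have hdiff0 : μ₀ (D \ D') = 0 := by
      rw [measure_diff hD'sub (hDmeas.preimage hmeas2).nullMeasurableSet
        (by rw [hD'0]; exact ENNReal.ofReal_ne_top), hD0, hD'0, tsub_self]
    by_cases hcone : ∀ x ∈ D, (2:ℝ) • x ∈ D
    · -- D is a cone
      by_cases huniv : D = Set.univ
      · rw [huniv, measure_univ] at hD0
        exact absurd hD0.symm (ENNReal.ofReal_lt_one.mpr hα1).ne
      · obtain ⟨p, hp⟩ := (Set.ne_univ_iff_exists_notMem D).mp huniv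
        obtain ⟨f, u, hfa, hup⟩ := geometric_hahn_banach_closed_point hDconv hDclosed hp
        have hu0 : 0 < u := by simpa using hfa 0 h0D
        have hf : f ≠ 0 := by
          intro h; rw [h] at hup; simp at hup; linarith
        refine hhalf f hf fun a ha => ?_
        by_contra hfa0
        push_neg at hfa0
        have hpow : ∀ n : ℕ, ((2:ℝ) ^ n) • a ∈ D := by
          intro n
          induction n with
          | zero => simpa using ha
          | succ n ih =>
            have := hcone _ ih
            rw [smul_smul] at this
            rw [pow_succ, mul_comm]
            exact this
        obtain ⟨n, hn⟩ := pow_unbounded_of_one_lt (u / f a) (by norm_num : (1:ℝ) < 2)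
        have hlt : (2:ℝ) ^ n * f a < u := by
          simpa using hfa _ (hpow n)
        rw [div_lt_iff₀ hfa0] at hn
        linarith
    · -- there is x ∈ D with 2 • x ∉ D : positive measure chunk in D \ D'
      push_neg at hcone
      obtain ⟨x, hxD, hxn⟩ := hcone
      -- interior of D is nonempty
      have hvolD : volume D ≠ 0 := by
        intro h
        have := hac0 h
        rw [hD0] at this
        exact absurd this (ENNReal.ofReal_pos.mpr (by linarith)).ne'
      have hint : (interior D).Nonempty := by
        by_contra hempty
        rw [Set.not_nonempty_iff_eq_empty] at hempty
        have hspan : affineSpan ℝ D ≠ ⊤ := by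
          intro htop
          rw [← hDconv.interior_nonempty_iff_affineSpan_eq_top] at htop
          exact htop.ne_empty hempty
        exact hvolD (measure_mono_null (subset_affineSpan ℝ D)
          (Measure.addHaar_affineSubspace volume _ hspan))
      obtain ⟨w, hw⟩ := hint
      -- find a point of interior D whose double is outside D
      have hcont : Continuous fun t : ℝ => (2:ℝ) • (t • w + ((1:ℝ) - t) • x) := by
        fun_prop
      have hmem0 : (2:ℝ) • ((0:ℝ) • w + ((1:ℝ) - 0) • x) ∈ Dᶜ := by
        simpa using hxn
      have hev : ∀ᶠ t : ℝ in nhds 0, (2:ℝ) • (t • w + ((1:ℝ) - t) • x) ∈ Dᶜ :=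
        hcont.continuousAt.eventually_mem (hDclosed.isOpen_compl.mem_nhds hmem0)
      obtain ⟨δ, hδpos, hδ⟩ := Metric.eventually_nhds_iff.mp hev
      set t : ℝ := min (δ / 2) (1 / 2) with ht
      have ht0 : 0 < t := lt_min (by linarith) (by norm_num)
      have ht1 : t ≤ 1 / 2 := min_le_right _ _
      have htδ : dist t 0 < δ := by
        rw [Real.dist_eq, sub_zero, abs_of_pos ht0]
        calc t ≤ δ / 2 := min_le_left _ _
        _ < δ := by linarith
      have hy2 : (2:ℝ) • (t • w + ((1:ℝ) - t) • x) ∈ Dᶜ := hδ htδ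
      set y : E := t • w + ((1:ℝ) - t) • x with hy
      have hyint : y ∈ interior D :=
        hDconv.combo_interior_closure_mem_interior hw (subset_closure hxD) ht0
          (by linarith) (by ring)
      set U : Set E := interior D ∩ h2 ⁻¹' Dᶜ with hU
      have hUopen : IsOpen U :=
        isOpen_interior.inter (hDclosed.isOpen_compl.preimage (continuous_const_smul _))
      have hyU : y ∈ U := ⟨hyint, hy2⟩
      have hUsub : U ⊆ D \ D' := fun z hz =>
        ⟨interior_subset hz.1, fun hmem => hz.2 hmem⟩
      have hpos : 0 < μ₀ U :=
        nccMu_pos d hUopen.measurableSet (hUopen.measure_pos volume ⟨y, hyU⟩).ne'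
      exact absurd (measure_mono_null hUsub hdiff0) hpos.ne'
  · -- case B : 0 ∉ D
    obtain ⟨f, u, h0u, hfb⟩ := geometric_hahn_banach_point_closed hDconv hDclosed h0D
    have hu0 : 0 < u := by simpa using h0u
    have hDne : D.Nonempty := by
      rcases D.eq_empty_or_nonempty with h | h
      · rw [h, measure_empty] at hD0
        exact absurd hD0.symm (ENNReal.ofReal_pos.mpr (by linarith)).ne'
      · exact h
    obtain ⟨b, hb⟩ := hDne
    have hf : f ≠ 0 := by
      intro h
      have := hfb b hb
      rw [h] at this; simp at this; linarith
    exact hhalf' f hf fun a ha => lt_trans hu0 (hfb a ha)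
end

section
/- For d ≥ 1 there exist d + 2 absolutely continuous probability measures on ℝ^d, concentrated near the vertices of a nondegenerate simplex S and near the barycenter w of S, such that for every α ∈ (0,1) with α < 1, no convex set C satisfies μᵢ(C) = α for all i = 1,…,d+2, provided the concentration neighborhoods are small enough relative to α. -/
set_option maxHeartbeats 1000000


open MeasureTheory Metric Set
open scoped RealInnerProductSpace

/-- The "gap" lemma: for a spanning affine family `v` with barycenter `w`, there is `c > 0`
such that every unit vector `y` has inner product at least `c` with some `v i - w`. -/
lemma aux_gap (d : ℕ) (hd : 1 ≤ d) (v : Fin (d + 1) → EuclideanSpace ℝ (Fin d))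
    (hv : affineSpan ℝ (Set.range v) = ⊤) :
    ∃ c : ℝ, 0 < c ∧ ∀ y : EuclideanSpace ℝ (Fin d), ‖y‖ = 1 →
      ∃ i, c ≤ ⟪y, v i - ((((d : ℝ) + 1))⁻¹ • ∑ j, v j)⟫ := by
  have : Nontrivial (EuclideanSpace ℝ (Fin d)) :=
    Module.nontrivial_of_finrank_pos (R := ℝ) (by rw [finrank_euclideanSpace_fin]; omega)
  set w : EuclideanSpace ℝ (Fin d) := (((d : ℝ) + 1))⁻¹ • ∑ j, v j with hw
  have hd1 : ((d : ℝ) + 1) ≠ 0 := by positivity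
  have hsum : ∑ i, (v i - w) = 0 := by
    have h1 : ((d : ℝ) + 1) • w = ∑ j, v j := by rw [hw, smul_inv_smul₀ hd1]
    rw [Finset.sum_sub_distrib, Finset.sum_const, Finset.card_univ, Fintype.card_fin,
      ← Nat.cast_smul_eq_nsmul ℝ, Nat.cast_add, Nat.cast_one, h1, sub_self]
  have hspan : Submodule.span ℝ (Set.range fun i => v i - w) = ⊤ := by
    refine top_unique ?_
    have h1 : vectorSpan ℝ (Set.range v) = ⊤ := by
      rw [← direction_affineSpan, hv, AffineSubspace.direction_top]
    rw [← h1, vectorSpan_eq_span_vsub_set_right ℝ (Set.mem_range_self (0 : Fin (d + 1)))]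
    refine Submodule.span_le.2 ?_
    rintro x ⟨_, ⟨i, rfl⟩, rfl⟩
    show v i -ᵥ v 0 ∈ Submodule.span ℝ (Set.range fun i => v i - w)
    have h2 : v i -ᵥ v 0 = (v i - w) - (v 0 - w) := by
      simp [vsub_eq_sub]
    rw [h2]
    exact Submodule.sub_mem _ (Submodule.subset_span ⟨i, rfl⟩)
      (Submodule.subset_span ⟨0, rfl⟩)
  have hne : (Finset.univ : Finset (Fin (d + 1))).Nonempty := Finset.univ_nonempty
  set g : EuclideanSpace ℝ (Fin d) → ℝ :=
    Finset.univ.sup' hne (fun i => fun y => ⟪y, v i - w⟫) with hgdef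
  have hgapp : ∀ y, g y = Finset.univ.sup' hne fun i => ⟪y, v i - w⟫ := by
    intro y; rw [hgdef, Finset.sup'_apply]
  have hgc : Continuous g := by
    rw [continuous_iff_continuousAt]
    intro y
    exact ContinuousAt.finset_sup' hne fun i _ =>
      (Continuous.inner continuous_id continuous_const).continuousAt
  have hcs : IsCompact (sphere (0 : EuclideanSpace ℝ (Fin d)) 1) := isCompact_sphere _ _
  have hsne : (sphere (0 : EuclideanSpace ℝ (Fin d)) 1).Nonempty :=
    NormedSpace.sphere_nonempty.2 zero_le_one
  obtain ⟨y₀, hy₀, hmin⟩ := hcs.exists_isMinOn hsne hgc.continuousOn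
  have hy₀n : ‖y₀‖ = 1 := by rwa [mem_sphere_zero_iff_norm] at hy₀
  refine ⟨g y₀, ?_, ?_⟩
  · -- positivity of the minimum
    by_contra hle
    push_neg at hle
    have hall : ∀ i : Fin (d + 1), ⟪y₀, v i - w⟫ ≤ 0 := by
      intro i
      calc ⟪y₀, v i - w⟫ ≤ g y₀ := by
            rw [hgapp]; exact Finset.le_sup' (fun i => ⟪y₀, v i - w⟫) (Finset.mem_univ i)
        _ ≤ 0 := hle
    have hsum0 : ∑ i, ⟪y₀, v i - w⟫ = 0 := by
      rw [← inner_sum, hsum, inner_zero_right]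
    have hzero : ∀ i ∈ Finset.univ, ⟪y₀, v i - w⟫ = 0 :=
      (Finset.sum_eq_zero_iff_of_nonpos fun i _ => hall i).1 hsum0
    have hmem : ∀ x ∈ Set.range fun i => v i - w, x ∈ (ℝ ∙ y₀)ᗮ := by
      rintro x ⟨i, rfl⟩
      exact Submodule.mem_orthogonal_singleton_iff_inner_right.2 (hzero i (Finset.mem_univ i))
    have htop : (⊤ : Submodule ℝ (EuclideanSpace ℝ (Fin d))) ≤ (ℝ ∙ y₀)ᗮ := by
      rw [← hspan]; exact Submodule.span_le.2 hmem
    have h0 : ⟪y₀, y₀⟫ = 0 :=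
      (htop Submodule.mem_top) y₀ (Submodule.mem_span_singleton_self y₀)
    have : y₀ = 0 := inner_self_eq_zero.1 h0
    rw [this, norm_zero] at hy₀n
    exact one_ne_zero hy₀n.symm
  · intro y hy
    have hys : y ∈ sphere (0 : EuclideanSpace ℝ (Fin d)) 1 := by
      rwa [mem_sphere_zero_iff_norm]
    have h1 : g y₀ ≤ g y := hmin hys
    obtain ⟨i, _, hi⟩ := Finset.exists_mem_eq_sup' hne fun i => ⟪y, v i - w⟫
    exact ⟨i, le_trans h1 (le_of_eq ((hgapp y).trans hi))⟩

/-- For any `α ∈ (0,1)` there are `d+2` absolutely continuous probability measures on `ℝ^d`,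
concentrated in small neighborhoods of the vertices of a nondegenerate simplex and of its
barycenter, such that no convex set carries mass `α` of all of them. -/
theorem no_convex_cut_d_plus_2 (d : ℕ) (hd : 1 ≤ d) (α : ℝ) (hα0 : 0 < α) (hα1 : α < 1) :
    ∃ v : Fin (d + 1) → EuclideanSpace ℝ (Fin d), AffineIndependent ℝ v ∧
      ∃ δ : ℝ, 0 < δ ∧
        ∃ μ : Fin (d + 2) → Measure (EuclideanSpace ℝ (Fin d)),
          (∀ i, μ i ≪ volume) ∧ (∀ i, IsProbabilityMeasure (μ i)) ∧
          (∀ i : Fin (d + 1), μ i.castSucc {x | δ ≤ dist x (v i)} = 0) ∧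
          μ (Fin.last (d + 1)) {x | δ ≤ dist x ((((d : ℝ) + 1))⁻¹ • ∑ i, v i)} = 0 ∧
          ∀ C : Set (EuclideanSpace ℝ (Fin d)), Convex ℝ C →
            ¬∀ i, μ i C = ENNReal.ofReal α := by
  classical
  obtain ⟨b⟩ := AffineBasis.exists_affineBasis_of_finiteDimensional
    (ι := Fin (d + 1)) (k := ℝ) (V := EuclideanSpace ℝ (Fin d)) (P := EuclideanSpace ℝ (Fin d))
    (by rw [Fintype.card_fin, finrank_euclideanSpace_fin])
  set v : Fin (d + 1) → EuclideanSpace ℝ (Fin d) := ⇑b with hvdef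
  obtain ⟨c, hc, hcy⟩ := aux_gap d hd v b.tot
  set w : EuclideanSpace ℝ (Fin d) := (((d : ℝ) + 1))⁻¹ • ∑ j, v j with hw
  set ρ : ℝ := c / 3 with hρ
  have hρpos : 0 < ρ := by positivity
  set p : Fin (d + 2) → EuclideanSpace ℝ (Fin d) := Fin.lastCases w v with hp
  set μ : Fin (d + 2) → Measure (EuclideanSpace ℝ (Fin d)) :=
    fun j => (volume (ball (p j) ρ))⁻¹ • volume.restrict (ball (p j) ρ) with hμ
  have hballpos : ∀ j, volume (ball (p j) ρ) ≠ 0 :=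
    fun j => (measure_ball_pos volume (p j) hρpos).ne'
  have hballtop : ∀ j, volume (ball (p j) ρ) ≠ ⊤ := fun j => measure_ball_lt_top.ne
  have happly : ∀ j (s : Set (EuclideanSpace ℝ (Fin d))),
      μ j s = (volume (ball (p j) ρ))⁻¹ * volume (s ∩ ball (p j) ρ) := by
    intro j s
    rw [hμ]
    simp only [Measure.smul_apply, smul_eq_mul]
    rw [Measure.restrict_apply' measurableSet_ball]
  have hprob : ∀ j, IsProbabilityMeasure (μ j) := by
    intro j
    refine ⟨?_⟩
    rw [happly, Set.univ_inter, ENNReal.inv_mul_cancel (hballpos j) (hballtop j)]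
  have hfull : ∀ j, μ j (ball (p j) ρ) = 1 := by
    intro j
    rw [happly, Set.inter_self, ENNReal.inv_mul_cancel (hballpos j) (hballtop j)]
  refine ⟨v, b.ind, c / 2, by positivity, μ, ?_, hprob, ?_, ?_, ?_⟩
  · intro j
    exact ((Measure.restrict_le_self).absolutelyContinuous).smul_left _
  · -- vertex measures are concentrated near the vertices
    intro i
    have hpi : p i.castSucc = v i := by rw [hp]; exact Fin.lastCases_castSucc ..
    rw [happly, hpi]
    have : {x : EuclideanSpace ℝ (Fin d) | c / 2 ≤ dist x (v i)} ∩ ball (v i) ρ = ∅ := by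
      ext x
      simp only [Set.mem_inter_iff, Set.mem_setOf_eq, mem_ball, Set.mem_empty_iff_false,
        iff_false, not_and, not_lt]
      intro hx
      calc ρ = c / 3 := hρ
        _ ≤ c / 2 := by linarith
        _ ≤ dist x (v i) := hx
    rw [this, measure_empty, mul_zero]
  · -- the last measure is concentrated near the barycenter
    have hpl : p (Fin.last (d + 1)) = w := by rw [hp]; exact Fin.lastCases_last ..
    rw [happly, hpl]
    have : {x : EuclideanSpace ℝ (Fin d) | c / 2 ≤ dist x ((((d : ℝ) + 1))⁻¹ • ∑ i, v i)} ∩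
        ball w ρ = ∅ := by
      ext x
      simp only [Set.mem_inter_iff, Set.mem_setOf_eq, mem_ball, Set.mem_empty_iff_false,
        iff_false, not_and, not_lt, ← hw]
      intro hx
      calc ρ = c / 3 := hρ
        _ ≤ c / 2 := by linarith
        _ ≤ dist x w := hx
    rw [this, measure_empty, mul_zero]
  · -- no convex set has mass α in all measures
    intro C hC h
    have hαpos : (ENNReal.ofReal α) ≠ 0 := (ENNReal.ofReal_pos.2 hα0).ne'
    -- C meets each ball
    have hmeets : ∀ j : Fin (d + 2), ∃ x, x ∈ C ∧ x ∈ ball (p j) ρ := by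
      intro j
      by_contra hcon
      push_neg at hcon
      have hemp : C ∩ ball (p j) ρ = ∅ := by
        ext x
        simp only [Set.mem_inter_iff, Set.mem_empty_iff_false, iff_false, not_and]
        exact hcon x
      have : μ j C = 0 := by rw [happly, hemp, measure_empty, mul_zero]
      rw [h j] at this
      exact hαpos this
    -- pick points of C near each vertex
    have hx : ∀ i : Fin (d + 1), ∃ x, x ∈ C ∧ dist x (v i) < ρ := by
      intro i
      obtain ⟨x, hxC, hxb⟩ := hmeets i.castSucc
      have hpi : p i.castSucc = v i := by rw [hp]; exact Fin.lastCases_castSucc ..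
      rw [hpi, mem_ball] at hxb
      exact ⟨x, hxC, hxb⟩
    choose x hxC hxd using hx
    -- the ball around the barycenter is inside C
    have hball : ball w ρ ⊆ C := by
      intro z hz
      rw [mem_ball] at hz
      by_contra hzC
      have hhull : convexHull ℝ (Set.range x) ⊆ C :=
        convexHull_min (Set.range_subset_iff.2 hxC) hC
      have hzhull : z ∉ convexHull ℝ (Set.range x) := fun hmem => hzC (hhull hmem)
      have hclosed : IsClosed (convexHull ℝ (Set.range x)) :=
        ((Set.finite_range x).isCompact_convexHull (𝕜 := ℝ)).isClosed
      obtain ⟨f, u, hfu, huz⟩ :=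
        geometric_hahn_banach_closed_point (convex_convexHull ℝ _) hclosed hzhull
      set y : EuclideanSpace ℝ (Fin d) :=
        (InnerProductSpace.toDual ℝ (EuclideanSpace ℝ (Fin d))).symm f with hy
      have hyapp : ∀ t, ⟪y, t⟫ = f t := fun t => InnerProductSpace.toDual_symm_apply
      have hy0 : y ≠ 0 := by
        intro h0
        have h1 : f (x 0) < u := hfu _ (subset_convexHull ℝ _ (Set.mem_range_self 0))
        have h2 : (0 : ℝ) < f z - f (x 0) := by linarith
        have h3 : f z - f (x 0) = ⟪y, z - x 0⟫ := by rw [inner_sub_right, hyapp, hyapp]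
        rw [h3, h0, inner_zero_left] at h2
        exact lt_irrefl 0 h2
      have hynorm : (0 : ℝ) < ‖y‖ := norm_pos_iff.2 hy0
      have hyu : ‖(‖y‖⁻¹ • y : EuclideanSpace ℝ (Fin d))‖ = 1 := by
        rw [norm_smul, norm_inv, norm_norm, inv_mul_cancel₀ hynorm.ne']
      obtain ⟨i, hi⟩ := hcy (‖y‖⁻¹ • y) hyu
      rw [real_inner_smul_left] at hi
      have hkey : c * ‖y‖ ≤ ⟪y, v i - w⟫ := by
        have := mul_le_mul_of_nonneg_left hi hynorm.le
        rwa [← mul_assoc, mul_inv_cancel₀ hynorm.ne', one_mul, mul_comm ‖y‖ c] at this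
      have hsplit : ⟪y, v i - w⟫ = f (v i) - f w := by
        rw [inner_sub_right, hyapp, hyapp]
      -- bound f (v i) by f (x i)
      have hvx : f (v i) - f (x i) ≤ ‖y‖ * ρ := by
        have h1 : f (v i) - f (x i) = ⟪y, v i - x i⟫ := by rw [inner_sub_right, hyapp, hyapp]
        have h2 : ⟪y, v i - x i⟫ ≤ ‖y‖ * ‖v i - x i‖ := real_inner_le_norm _ _
        have h3 : ‖v i - x i‖ ≤ ρ := by
          rw [← dist_eq_norm, dist_comm]
          exact (hxd i).le
        nlinarith [hynorm]
      have hzw : f z - f w ≤ ‖y‖ * ρ := by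
        have h1 : f z - f w = ⟪y, z - w⟫ := by rw [inner_sub_right, hyapp, hyapp]
        have h2 : ⟪y, z - w⟫ ≤ ‖y‖ * ‖z - w‖ := real_inner_le_norm _ _
        have h3 : ‖z - w‖ ≤ ρ := by rw [← dist_eq_norm]; exact hz.le
        nlinarith [hynorm]
      have hxiu : f (x i) < u := hfu _ (subset_convexHull ℝ _ (Set.mem_range_self i))
      -- combine
      have : c * ‖y‖ < 2 * (‖y‖ * ρ) := by
        calc c * ‖y‖ ≤ f (v i) - f w := by rw [← hsplit]; exact hkey
          _ < u + ‖y‖ * ρ - f w := by linarith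
          _ < f z + ‖y‖ * ρ - f w := by linarith
          _ ≤ 2 * (‖y‖ * ρ) := by linarith
      rw [hρ] at this
      nlinarith [hynorm]
    -- contradiction via the last measure
    have h1 : (1 : ENNReal) ≤ μ (Fin.last (d + 1)) C := by
      have hpl : p (Fin.last (d + 1)) = w := by rw [hp]; exact Fin.lastCases_last ..
      calc (1 : ENNReal) = μ (Fin.last (d + 1)) (ball (p (Fin.last (d + 1))) ρ) :=
            (hfull _).symm
        _ ≤ μ (Fin.last (d + 1)) C := by
            refine measure_mono ?_
            rw [hpl]
            exact hball
    rw [h (Fin.last (d + 1))] at h1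
    exact absurd (lt_of_le_of_lt h1 (ENNReal.ofReal_lt_one.2 hα1)) (lt_irrefl 1)
end
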